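/- arXiv:2011.03314 — 5 statements merged into one kernel-verified Lean document; each statement's English description precedes it below -/
import Mathlib

section
/- Let r ≠ 0, Δ > 0, σ > 0, R > 0, α ∈ (0, 1/2), μ ∈ ℝ, and let q be the unique real number with Φ(q) = α. Define the set K_ES := { π ∈ ℝ : −((μ−r)(e^{rΔ}−1)/r)·π + σ·√((e^{2rΔ}−1)/(2r))·(φ(q)/α)·|π| ≤ R } and the constant M_ES := √((e^{2rΔ}−1)/(2r))·(r/(e^{rΔ}−1))·(φ(q)/α). Then M_ES > 0, and with k₁ := −R/( σ√((e^{2rΔ}−1)/(2r))·(φ(q)/α) + (μ−r)(e^{rΔ}−1)/r ) and k₂ := R/( σ√((e^{2rΔ}−1)/(2r))·(φ(q)/α) − (μ−r)(e^{rΔ}−1)/r ): (i) if (μ−r)/σ ≥ M_ES then k₁ ∈ (−∞,0) and K_ES = [k₁, ∞); (ii) if |(μ−r)/σ| < M_ES then k₁ ∈ (−∞,0), k₂ ∈ (0,∞) and K_ES = [k₁, k₂]; (iii) if (μ−r)/σ ≤ −M_ES then k₂ ∈ (0,∞) and K_ES = (−∞, k₂]. -/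
/-! Writing the constraint as `-A x + B |x| ≤ R` with `B > 0`, one has
`-A x + B |x| = max ((B - A) x) (-(B + A) x)`, so `K_ES` is the intersection of the two
half-lines `(B - A) x ≤ R` and `-(B + A) x ≤ R`. Each is a ray whose direction is decided by the
sign of `B - A`, resp. `B + A`; when one coefficient is nonpositive its half-line contains the
other (as `R ≥ 0`). Since `A` and `B` are `(μ - r) / σ` and `M_ES` times the positive factor
`σ (e^{rΔ} - 1) / r`, these signs are read off by comparing `(μ - r) / σ` with `± M_ES`. -/

open MeasureTheory ProbabilityTheory Real Filter Set

/-- Cumulative distribution function of the standard normal distribution. -/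
noncomputable def stdNormalCDF : ℝ → ℝ :=
  fun x => ProbabilityTheory.cdf (ProbabilityTheory.gaussianReal 0 1) x

/-- Density of the standard normal distribution. -/
noncomputable def stdNormalPDF : ℝ → ℝ :=
  fun x => Real.exp (-x^2/2) / Real.sqrt (2 * Real.pi)

lemma exp_mul_sub_one_div_pos {c t : ℝ} (hc : c ≠ 0) (ht : 0 < t) :
    0 < (exp (c * t) - 1) / c := by
  rcases hc.lt_or_gt with hc | hc
  · exact div_pos_of_neg_of_neg (sub_neg.2 (exp_lt_one_iff.2 (mul_neg_of_neg_of_pos hc ht))) hc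
  · exact div_pos (sub_pos.2 (one_lt_exp_iff.2 (mul_pos hc ht))) hc

section AbsConstraint

variable {A B R : ℝ}

lemma neg_mul_add_mul_abs_eq_max (hB : 0 ≤ B) (x : ℝ) :
    -A * x + B * |x| = max ((B - A) * x) (-((B + A) * x)) := by
  rw [abs_eq_max_neg, mul_max_of_nonneg _ _ hB, ← max_add_add_left]
  congr 1 <;> ring

lemma setOf_neg_mul_add_mul_abs_le (hB : 0 ≤ B) :
    {x : ℝ | -A * x + B * |x| ≤ R} = {x | (B - A) * x ≤ R} ∩ {x | -((B + A) * x) ≤ R} := by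
  ext x
  simp only [mem_ofPred_eq, mem_inter_iff, neg_mul_add_mul_abs_eq_max hB, max_le_iff]

lemma setOf_mul_le_eq_Iic {c : ℝ} (hc : 0 < c) : {x : ℝ | c * x ≤ R} = Iic (R / c) := by
  ext x
  rw [mem_ofPred_eq, mem_Iic, le_div_iff₀ hc, mul_comm]

lemma setOf_neg_mul_le_eq_Ici {c : ℝ} (hc : 0 < c) : {x : ℝ | -(c * x) ≤ R} = Ici (-R / c) := by
  ext x
  rw [mem_ofPred_eq, mem_Ici, div_le_iff₀ hc, neg_le, mul_comm]

lemma setOf_neg_mul_add_mul_abs_le_eq_Icc (hA : |A| < B) :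
    {x : ℝ | -A * x + B * |x| ≤ R} = Icc (-R / (B + A)) (R / (B - A)) := by
  obtain ⟨hBA, hAB⟩ := abs_lt.1 hA
  rw [setOf_neg_mul_add_mul_abs_le (by linarith [abs_nonneg A]),
    setOf_mul_le_eq_Iic (by linarith), setOf_neg_mul_le_eq_Ici (by linarith),
    inter_comm, Ici_inter_Iic]

lemma setOf_neg_mul_add_mul_abs_le_eq_Ici (hB : 0 < B) (hR : 0 ≤ R) (hBA : B ≤ A) :
    {x : ℝ | -A * x + B * |x| ≤ R} = Ici (-R / (B + A)) := by
  rw [setOf_neg_mul_add_mul_abs_le hB.le, inter_eq_right.2, setOf_neg_mul_le_eq_Ici (by linarith)]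
  intro x (hx : -((B + A) * x) ≤ R)
  show (B - A) * x ≤ R
  -- for `x ≥ 0` the left side is `≤ 0`, for `x ≤ 0` it is at most `-((B + A) * x)`
  rcases le_total 0 x with h | h <;> nlinarith

lemma setOf_neg_mul_add_mul_abs_le_eq_Iic (hB : 0 < B) (hR : 0 ≤ R) (hAB : A ≤ -B) :
    {x : ℝ | -A * x + B * |x| ≤ R} = Iic (R / (B - A)) := by
  rw [setOf_neg_mul_add_mul_abs_le hB.le, inter_eq_left.2, setOf_mul_le_eq_Iic (by linarith)]
  intro x (hx : (B - A) * x ≤ R)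
  show -((B + A) * x) ≤ R
  rcases le_total 0 x with h | h <;> nlinarith

end AbsConstraint

lemma stdNormalPDF_pos (x : ℝ) : 0 < stdNormalPDF x := by
  unfold stdNormalPDF
  positivity

theorem dynamic_ES_constraint_set_general
    (r Δ σ R α μ q : ℝ) (hr : r ≠ 0) (hΔ : 0 < Δ) (hσ : 0 < σ) (hR : 0 < R)
    (hα₁ : 0 < α)
    (K_ES : Set ℝ)
    (hK : K_ES = {x : ℝ |
      -((μ - r) * (Real.exp (r*Δ) - 1) / r) * x
        + σ * Real.sqrt ((Real.exp (2*r*Δ) - 1) / (2*r)) * (stdNormalPDF q / α) * |x| ≤ R})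
    (M_ES k₁ k₂ : ℝ)
    (hM : M_ES = Real.sqrt ((Real.exp (2*r*Δ) - 1) / (2*r))
        * (r / (Real.exp (r*Δ) - 1)) * (stdNormalPDF q / α))
    (hk₁ : k₁ = -R / (σ * Real.sqrt ((Real.exp (2*r*Δ) - 1) / (2*r)) * (stdNormalPDF q / α)
        + (μ - r) * (Real.exp (r*Δ) - 1) / r))
    (hk₂ : k₂ = R / (σ * Real.sqrt ((Real.exp (2*r*Δ) - 1) / (2*r)) * (stdNormalPDF q / α)
        - (μ - r) * (Real.exp (r*Δ) - 1) / r)) :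
    0 < M_ES ∧
    ((μ - r) / σ ≥ M_ES → (k₁ < 0 ∧ K_ES = Set.Ici k₁)) ∧
    (|(μ - r) / σ| < M_ES → (k₁ < 0 ∧ 0 < k₂ ∧ K_ES = Set.Icc k₁ k₂)) ∧
    ((μ - r) / σ ≤ -M_ES → (0 < k₂ ∧ K_ES = Set.Iic k₂)) := by
  set E := (Real.exp (r*Δ) - 1) / r with hE_def
  set S := Real.sqrt ((Real.exp (2*r*Δ) - 1) / (2*r))
  set p := stdNormalPDF q / α
  have hE : 0 < E := exp_mul_sub_one_div_pos hr hΔ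
  have hS : 0 < S := sqrt_pos.2 (exp_mul_sub_one_div_pos (mul_ne_zero two_ne_zero hr) hΔ)
  have hp : 0 < p := div_pos (stdNormalPDF_pos q) hα₁
  have hσE : 0 < σ * E := mul_pos hσ hE
  rw [← inv_div, ← hE_def] at hM
  have hA : (μ - r) * (Real.exp (r*Δ) - 1) / r = (μ - r) / σ * (σ * E) := by
    rw [hE_def]; field_simp
  have hB : σ * S * p = M_ES * (σ * E) := by
    rw [hM]; field_simp
  have hM_pos : 0 < M_ES := by rw [hM]; positivity
  have hB_pos : 0 < M_ES * (σ * E) := mul_pos hM_pos hσE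
  rw [hA, hB] at hK hk₁ hk₂
  subst hK hk₁ hk₂
  refine ⟨hM_pos, fun h => ?_, fun h => ?_, fun h => ?_⟩
  · have hMA : M_ES * (σ * E) ≤ (μ - r) / σ * (σ * E) := mul_le_mul_of_nonneg_right h hσE.le
    exact ⟨div_neg_of_neg_of_pos (neg_neg_of_pos hR) (by linarith),
      setOf_neg_mul_add_mul_abs_le_eq_Ici hB_pos hR.le hMA⟩
  · have hAM : |(μ - r) / σ * (σ * E)| < M_ES * (σ * E) := by
      rw [abs_mul, abs_of_pos hσE]; exact mul_lt_mul_of_pos_right h hσE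
    obtain ⟨h₁, h₂⟩ := abs_lt.1 hAM
    exact ⟨div_neg_of_neg_of_pos (neg_neg_of_pos hR) (by linarith),
      div_pos hR (by linarith), setOf_neg_mul_add_mul_abs_le_eq_Icc hAM⟩
  · have hAM : (μ - r) / σ * (σ * E) ≤ -(M_ES * (σ * E)) := by
      rw [← neg_mul]; exact mul_le_mul_of_nonneg_right h hσE.le
    exact ⟨div_pos hR (by linarith),
      setOf_neg_mul_add_mul_abs_le_eq_Iic hB_pos hR.le hAM⟩

/-- The set of admissible risky-asset positions under a dynamic Expected Shortfall
constraint with risk limit `R`, quantile `q = Φ⁻¹(α)` and evaluation window `Δ`. -/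
theorem dynamic_ES_constraint_set
    (r Δ σ R α μ q : ℝ) (hr : r ≠ 0) (hΔ : 0 < Δ) (hσ : 0 < σ) (hR : 0 < R)
    (hα₁ : 0 < α) (hα₂ : α < 1/2) (hq : stdNormalCDF q = α)
    (K_ES : Set ℝ)
    (hK : K_ES = {x : ℝ |
      -((μ - r) * (Real.exp (r*Δ) - 1) / r) * x
        + σ * Real.sqrt ((Real.exp (2*r*Δ) - 1) / (2*r)) * (stdNormalPDF q / α) * |x| ≤ R})
    (M_ES k₁ k₂ : ℝ)
    (hM : M_ES = Real.sqrt ((Real.exp (2*r*Δ) - 1) / (2*r))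
        * (r / (Real.exp (r*Δ) - 1)) * (stdNormalPDF q / α))
    (hk₁ : k₁ = -R / (σ * Real.sqrt ((Real.exp (2*r*Δ) - 1) / (2*r)) * (stdNormalPDF q / α)
        + (μ - r) * (Real.exp (r*Δ) - 1) / r))
    (hk₂ : k₂ = R / (σ * Real.sqrt ((Real.exp (2*r*Δ) - 1) / (2*r)) * (stdNormalPDF q / α)
        - (μ - r) * (Real.exp (r*Δ) - 1) / r)) :
    0 < M_ES ∧
    ((μ - r) / σ ≥ M_ES → (k₁ < 0 ∧ K_ES = Set.Ici k₁)) ∧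
    (|(μ - r) / σ| < M_ES → (k₁ < 0 ∧ 0 < k₂ ∧ K_ES = Set.Icc k₁ k₂)) ∧
    ((μ - r) / σ ≤ -M_ES → (0 < k₂ ∧ K_ES = Set.Iic k₂)) :=
  dynamic_ES_constraint_set_general r Δ σ R α μ q hr hΔ hσ hR hα₁ K_ES hK M_ES k₁ k₂ hM hk₁ hk₂
end

section
/- For α ∈ (0,1) let q(α) denote the unique real number with Φ(q(α)) = α. Then the function α ↦ φ(q(α))/α is strictly decreasing on (0,1); that is, for 0 < α₁ < α₂ < 1 one has φ(q(α₁))/α₁ > φ(q(α₂))/α₂. -/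
open MeasureTheory ProbabilityTheory Real Filter Set

lemma setIntegral_Iic_pos {f : ℝ → ℝ} {x : ℝ} (hf : ∀ t < x, 0 < f t)
    (hint : IntegrableOn f (Iic x)) : 0 < ∫ t in Iic x, f t := by
  rw [setIntegral_congr_set Iio_ae_eq_Iic.symm,
    setIntegral_pos_iff_support_of_nonneg_ae
      (ae_restrict_of_forall_mem measurableSet_Iio fun t ht => (hf t ht).le)
      (hint.mono_set Iio_subset_Iic_self)]
  have hsupp : Function.support f ∩ Iio x = Iio x :=
    inter_eq_right.mpr fun t ht => (hf t ht).ne'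
  simp [hsupp]

lemma stdNormalPDF_eq_gaussianPDFReal : stdNormalPDF = gaussianPDFReal 0 1 := by
  funext x
  simp [stdNormalPDF, gaussianPDFReal, div_eq_inv_mul]

lemma continuous_stdNormalPDF : Continuous stdNormalPDF := by
  unfold stdNormalPDF
  fun_prop

lemma integrable_stdNormalPDF : Integrable stdNormalPDF := by
  rw [stdNormalPDF_eq_gaussianPDFReal]
  exact integrable_gaussianPDFReal 0 1

lemma integrable_neg_mul_stdNormalPDF : Integrable fun t => -t * stdNormalPDF t := by
  refine ((integrable_mul_exp_neg_mul_sq (b := 1 / 2) (by norm_num)).neg.div_const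
    (√(2 * π))).congr (ae_of_all _ fun t => ?_)
  simp only [Pi.neg_apply, stdNormalPDF]
  ring_nf

lemma hasDerivAt_stdNormalPDF (x : ℝ) : HasDerivAt stdNormalPDF (-x * stdNormalPDF x) x := by
  have h : HasDerivAt (fun y : ℝ => -y ^ 2 / 2) (-x) x :=
    ((hasDerivAt_pow 2 x).fun_neg.div_const 2).congr_deriv (by push_cast; ring)
  exact (h.exp.div_const (√(2 * π))).congr_deriv (by unfold stdNormalPDF; ring)

lemma integral_Iic_neg_mul_stdNormalPDF (x : ℝ) :
    ∫ t in Iic x, -t * stdNormalPDF t = stdNormalPDF x := by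
  have hlim : Tendsto stdNormalPDF atBot (nhds 0) :=
    tendsto_zero_of_hasDerivAt_of_integrableOn_Iic (a := 0)
      (fun t _ => hasDerivAt_stdNormalPDF t) integrable_neg_mul_stdNormalPDF.integrableOn
      integrable_stdNormalPDF.integrableOn
  rw [integral_Iic_of_hasDerivAt_of_tendsto' (fun t _ => hasDerivAt_stdNormalPDF t)
    integrable_neg_mul_stdNormalPDF.integrableOn hlim, sub_zero]

lemma stdNormalCDF_eq_integral (x : ℝ) : stdNormalCDF x = ∫ t in Iic x, stdNormalPDF t := by
  rw [stdNormalCDF, cdf_eq_real, measureReal_def, gaussianReal_apply_eq_integral 0 one_ne_zero,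
    ENNReal.toReal_ofReal, stdNormalPDF_eq_gaussianPDFReal]
  exact setIntegral_nonneg measurableSet_Iic fun t _ => gaussianPDFReal_nonneg 0 1 t

lemma stdNormalCDF_pos (x : ℝ) : 0 < stdNormalCDF x := by
  rw [stdNormalCDF_eq_integral]
  exact setIntegral_Iic_pos (fun t _ => stdNormalPDF_pos t) integrable_stdNormalPDF.integrableOn

lemma hasDerivAt_stdNormalCDF (x : ℝ) : HasDerivAt stdNormalCDF (stdNormalPDF x) x := by
  have hCDF : stdNormalCDF = fun y => stdNormalCDF 0 + ∫ t in (0 : ℝ)..y, stdNormalPDF t := by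
    funext y
    rw [stdNormalCDF_eq_integral, stdNormalCDF_eq_integral, ← intervalIntegral.integral_Iic_sub_Iic
      integrable_stdNormalPDF.integrableOn integrable_stdNormalPDF.integrableOn]
    ring
  rw [hCDF]
  exact (intervalIntegral.integral_hasDerivAt_right integrable_stdNormalPDF.intervalIntegrable
    (continuous_stdNormalPDF.stronglyMeasurableAtFilter _ _)
    continuous_stdNormalPDF.continuousAt).const_add _

lemma stdNormalCDF_strictMono : StrictMono stdNormalCDF :=
  strictMono_of_hasDerivAt_pos hasDerivAt_stdNormalCDF stdNormalPDF_pos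

lemma mul_stdNormalCDF_add_stdNormalPDF_pos (x : ℝ) :
    0 < x * stdNormalCDF x + stdNormalPDF x := by
  have hφ : IntegrableOn (fun t => x * stdNormalPDF t) (Iic x) :=
    (integrable_stdNormalPDF.const_mul x).integrableOn
  have hψ : IntegrableOn (fun t => -t * stdNormalPDF t) (Iic x) :=
    integrable_neg_mul_stdNormalPDF.integrableOn
  have hsum : x * stdNormalCDF x + stdNormalPDF x = ∫ t in Iic x, (x - t) * stdNormalPDF t := by
    rw [stdNormalCDF_eq_integral, ← integral_Iic_neg_mul_stdNormalPDF x, ← integral_const_mul,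
      ← integral_add hφ hψ]
    congr 1 with t
    ring
  rw [hsum]
  refine setIntegral_Iic_pos (fun t ht => mul_pos (sub_pos.mpr ht) (stdNormalPDF_pos t)) ?_
  exact (hφ.add hψ).congr_fun (fun t _ => by simp only [Pi.add_apply]; ring) measurableSet_Iic

lemma stdNormalPDF_div_stdNormalCDF_strictAnti :
    StrictAnti fun x => stdNormalPDF x / stdNormalCDF x := by
  refine strictAnti_of_hasDerivAt_neg
    (fun x => (hasDerivAt_stdNormalPDF x).div (hasDerivAt_stdNormalCDF x)
      (stdNormalCDF_pos x).ne') fun x => div_neg_of_neg_of_pos ?_ (pow_pos (stdNormalCDF_pos x) 2)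
  linarith [mul_pos (stdNormalPDF_pos x) (mul_stdNormalCDF_add_stdNormalPDF_pos x)]

theorem es_factor_strictAnti_general
    (α₁ α₂ q₁ q₂ : ℝ) (h₁₂ : α₁ < α₂)
    (hq₁ : stdNormalCDF q₁ = α₁) (hq₂ : stdNormalCDF q₂ = α₂) :
    stdNormalPDF q₁ / α₁ > stdNormalPDF q₂ / α₂ := by
  subst hq₁ hq₂
  exact stdNormalPDF_div_stdNormalCDF_strictAnti (stdNormalCDF_strictMono.lt_iff_lt.mp h₁₂)

/-- The standard normal Expected Shortfall factor `α ↦ φ(Φ⁻¹(α))/α` is strictly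
decreasing on `(0,1)`: if `0 < α₁ < α₂ < 1` and `Φ(qᵢ) = αᵢ`, then
`φ(q₁)/α₁ > φ(q₂)/α₂`. -/
theorem es_factor_strictAnti
    (α₁ α₂ q₁ q₂ : ℝ) (h₁ : 0 < α₁) (h₁₂ : α₁ < α₂) (h₂ : α₂ < 1)
    (hq₁ : stdNormalCDF q₁ = α₁) (hq₂ : stdNormalCDF q₂ = α₂) :
    stdNormalPDF q₁ / α₁ > stdNormalPDF q₂ / α₂ :=
  es_factor_strictAnti_general α₁ α₂ q₁ q₂ h₁₂ hq₁ hq₂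
end

section
/- Let r ≠ 0. Then the function Δ ↦ ( r/(e^{rΔ} − 1) )·√( (e^{2rΔ} − 1)/(2r) ) is strictly decreasing on (0, ∞). -/
open Real Set

/-! Writing `u = e^{rΔ}`, the square of the factor simplifies to `r/2 + r/(u - 1)`. Since
`Δ ↦ r (e^{rΔ} - 1)` is strictly increasing and vanishes at `0`, the term
`r/(e^{rΔ} - 1) = r²/(r (e^{rΔ} - 1))` is strictly decreasing on `(0, ∞)`, hence so is
`√(r/2 + r/(e^{rΔ} - 1))`. -/

lemma strictMono_mul_exp_mul_sub_one {r : ℝ} (hr : r ≠ 0) :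
    StrictMono fun Δ : ℝ => r * (exp (r * Δ) - 1) := by
  intro x y hxy
  rcases hr.lt_or_gt with hneg | hpos
  · have : exp (r * y) < exp (r * x) := exp_lt_exp.2 (by nlinarith)
    nlinarith
  · have : exp (r * x) < exp (r * y) := exp_lt_exp.2 (by nlinarith)
    nlinarith

lemma mul_exp_mul_sub_one_pos {r Δ : ℝ} (hr : r ≠ 0) (hΔ : 0 < Δ) :
    0 < r * (exp (r * Δ) - 1) := by
  simpa using strictMono_mul_exp_mul_sub_one hr hΔ

lemma strictAntiOn_div_exp_mul_sub_one {r : ℝ} (hr : r ≠ 0) :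
    StrictAntiOn (fun Δ : ℝ => r / (exp (r * Δ) - 1)) (Ioi 0) := by
  intro x hx y _ hxy
  simp only [← mul_div_mul_left r _ hr, ← sq]
  exact div_lt_div_of_pos_left (by positivity) (mul_exp_mul_sub_one_pos hr hx)
    (strictMono_mul_exp_mul_sub_one hr hxy)

lemma div_sub_one_mul_sqrt_eq {r u : ℝ} (hru : 0 < r * (u - 1)) :
    r / (u - 1) * √((u ^ 2 - 1) / (2 * r)) = √(r / 2 + r / (u - 1)) := by
  have hr : r ≠ 0 := by rintro rfl; simp at hru
  have hu : u - 1 ≠ 0 := by intro h; simp [h] at hru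
  have hc : 0 ≤ r / (u - 1) := by
    rw [← mul_div_mul_left r _ hr, ← sq]
    positivity
  rw [← sqrt_sq hc, ← sqrt_mul (sq_nonneg _), sqrt_sq hc]
  congr 1
  field_simp
  ring

lemma half_add_div_sub_one_nonneg {r u : ℝ} (hu : 0 < u) (hru : 0 < r * (u - 1)) :
    0 ≤ r / 2 + r / (u - 1) := by
  have hu1 : u - 1 ≠ 0 := by intro h; simp [h] at hru
  have : r / 2 + r / (u - 1) = r * (u - 1) * (u + 1) / (2 * (u - 1) ^ 2) := by
    field_simp
    ring
  rw [this]
  positivity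

/-- The common factor `Δ ↦ (r/(e^{rΔ}-1))·√((e^{2rΔ}-1)/(2r))` in the threshold
constants `M_VaR` and `M_ES` is strictly decreasing in the evaluation window `Δ`. -/
theorem risk_threshold_factor_strictAnti (r : ℝ) (hr : r ≠ 0) :
    StrictAntiOn
      (fun Δ : ℝ => (r / (Real.exp (r*Δ) - 1))
        * Real.sqrt ((Real.exp (2*r*Δ) - 1) / (2*r)))
      (Set.Ioi (0 : ℝ)) := by
  have exp_two_mul_sq : ∀ Δ, exp (2 * r * Δ) = exp (r * Δ) ^ 2 := fun Δ => by
    rw [sq, ← exp_add]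
    ring_nf
  intro x hx y hy hxy
  have hx' := mul_exp_mul_sub_one_pos hr hx
  have hy' := mul_exp_mul_sub_one_pos hr hy
  simp only [exp_two_mul_sq, div_sub_one_mul_sqrt_eq hx', div_sub_one_mul_sqrt_eq hy']
  refine sqrt_lt_sqrt (half_add_div_sub_one_nonneg (exp_pos _) hy') ?_
  linarith [strictAntiOn_div_exp_mul_sub_one hr hx hy hxy]
end

section
/- For every c > 0, the ratio Φ(x − c)/Φ(x) tends to 0 as x → −∞. -/
open MeasureTheory ProbabilityTheory Real Filter Set

/-!
Shifting the mean of a Gaussian density by `c` multiplies it by the exponential tilt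
`exp ((c t - c² / 2) / v)`, which for `c ≥ 0` is at most `exp ((c x - c² / 2) / v)` on `(-∞, x]`.
Integrating, `Φ(x - c) ≤ exp (c x - c² / 2) Φ(x)`, and the ratio is squeezed to `0`.
-/

open scoped NNReal

namespace ProbabilityTheory

lemma gaussianPDFReal_eq_exp_mul (μ : ℝ) (v : ℝ≥0) (t : ℝ) :
    gaussianPDFReal μ v t = exp ((μ * t - μ ^ 2 / 2) / v) * gaussianPDFReal 0 v t := by
  simp only [gaussianPDFReal, mul_left_comm _ (√(2 * π * v))⁻¹, ← exp_add]
  ring_nf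

lemma gaussianPDFReal_le_exp_mul {μ : ℝ} (hμ : 0 ≤ μ) (v : ℝ≥0) {t x : ℝ} (ht : t ≤ x) :
    gaussianPDFReal μ v t ≤ exp ((μ * x - μ ^ 2 / 2) / v) * gaussianPDFReal 0 v t := by
  rw [gaussianPDFReal_eq_exp_mul]
  exact mul_le_mul_of_nonneg_right (by gcongr) (gaussianPDFReal_nonneg 0 v t)

lemma cdf_gaussianReal_eq_integral (μ : ℝ) {v : ℝ≥0} (hv : v ≠ 0) (x : ℝ) :
    cdf (gaussianReal μ v) x = ∫ t in Iic x, gaussianPDFReal μ v t := by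
  rw [cdf_eq_real, measureReal_def, gaussianReal_apply_eq_integral μ hv,
    ENNReal.toReal_ofReal (integral_nonneg fun t => gaussianPDFReal_nonneg μ v t)]

lemma cdf_gaussianReal_sub (μ : ℝ) (v : ℝ≥0) (c x : ℝ) :
    cdf (gaussianReal μ v) (x - c) = cdf (gaussianReal (μ + c) v) x := by
  rw [cdf_eq_real, cdf_eq_real, ← gaussianReal_map_add_const, measureReal_def, measureReal_def,
    Measure.map_apply (by fun_prop) measurableSet_Iic, preimage_add_const_Iic]

lemma cdf_gaussianReal_sub_le {c : ℝ} (hc : 0 ≤ c) {v : ℝ≥0} (hv : v ≠ 0) (x : ℝ) :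
    cdf (gaussianReal 0 v) (x - c) ≤
      exp ((c * x - c ^ 2 / 2) / v) * cdf (gaussianReal 0 v) x := by
  rw [cdf_gaussianReal_sub, zero_add, cdf_gaussianReal_eq_integral c hv,
    cdf_gaussianReal_eq_integral 0 hv, ← integral_const_mul]
  exact setIntegral_mono_on (integrable_gaussianPDFReal c v).integrableOn
    ((integrable_gaussianPDFReal 0 v).const_mul _).integrableOn measurableSet_Iic
    fun t ht => gaussianPDFReal_le_exp_mul hc v ht

end ProbabilityTheory

/-- Gaussian left-tail ratio asymptotics: for every `c > 0`,
`Φ(x - c)/Φ(x) → 0` as `x → -∞`. -/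
theorem gaussian_left_tail_ratio_tendsto_zero (c : ℝ) (hc : 0 < c) :
    Filter.Tendsto (fun x => stdNormalCDF (x - c) / stdNormalCDF x)
      Filter.atBot (nhds 0) := by
  have hbound (x : ℝ) : stdNormalCDF (x - c) / stdNormalCDF x ≤ exp (c * x - c ^ 2 / 2) := by
    refine div_le_of_le_mul₀ (cdf_nonneg _ x) (exp_nonneg _) ?_
    simpa only [stdNormalCDF, NNReal.coe_one, div_one] using
      cdf_gaussianReal_sub_le hc.le one_ne_zero x
  have hexp : Tendsto (fun x => exp (c * x - c ^ 2 / 2)) atBot (nhds 0) :=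
    tendsto_exp_atBot.comp <| tendsto_atBot_add_const_right _ _ <|
      (tendsto_const_mul_atBot_of_pos hc).mpr tendsto_id
  exact tendsto_of_tendsto_of_tendsto_of_le_of_le tendsto_const_nhds hexp
    (fun x => div_nonneg (cdf_nonneg _ _) (cdf_nonneg _ _)) hbound
end

section
/- Consider a two-asset economy with risk-free rate r ≠ 0, drifts μ₁, μ₂ ∈ ℝ, volatilities σ₁, σ₂ > 0, correlation ρ ∈ (−1, 1), evaluation window Δ > 0, risk limit R > 0 and confidence level α ∈ (0, 1/2), and let q be the unique real number with Φ(q) = α. Define K_ES := { (π₁, π₂) ∈ ℝ² : −((e^{rΔ}−1)/r)·( (μ₁−r)π₁ + (μ₂−r)π₂ ) + (φ(q)/α)·√( ((e^{2rΔ}−1)/(2r))·( σ₁²π₁² + σ₂²π₂² + 2ρσ₁σ₂π₁π₂ ) ) ≤ R } and M_ES := √((e^{2rΔ}−1)/(2r))·(r/(e^{rΔ}−1))·(φ(q)/α). If √( ( ((μ₁−r)/σ₁)² + ((μ₂−r)/σ₂)² − 2((μ₁−r)/σ₁)((μ₂−r)/σ₂)ρ ) / (1 − ρ²) ) < M_ES,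 then the set K_ES is bounded. -/
open MeasureTheory ProbabilityTheory Real Filter Set

/-!
Write `Q(π) = π'Σπ` and `m = μ - r e`. Since `M_ES` is exactly the ratio of the volatility
coefficient `(φ(q)/α)·√((e^{2rΔ}-1)/(2r))` to the drift coefficient `(e^{rΔ}-1)/r`, the constraint
reads `M_ES·√Q(π) - m'π ≤ R·r/(e^{rΔ}-1)`. Cauchy–Schwarz for the inner product given by `Σ`
bounds `m'π` by `S·√Q(π)`, where `S = √(m'Σ⁻¹m)` is the Sharpe ratio of the hypothesis, so
`(M_ES - S)·√Q(π)` is bounded on `K_ES`; and `√Q` dominates a multiple of the norm because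
`Σ` is positive definite.
-/

lemma exp_mul_sub_one_div_pos_s16 {x y : ℝ} (hx : x ≠ 0) (hy : 0 < y) :
    0 < (exp (x * y) - 1) / x := by
  rcases hx.lt_or_gt with hx | hx
  · exact div_pos_of_neg_of_neg (sub_neg.2 (exp_lt_one_iff.2 (mul_neg_of_neg_of_pos hx hy))) hx
  · exact div_pos (sub_pos.2 (one_lt_exp_iff.2 (mul_pos hx hy))) hx

lemma isBounded_setOf_mul_sub_le {E : Type*} [SeminormedAddCommGroup E] {f N : E → ℝ}
    {S M κ R : ℝ} (hf : ∀ x, f x ≤ S * N x) (hN : ∀ x, κ * ‖x‖ ≤ N x) (hκ : 0 < κ)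
    (hSM : S < M) : Bornology.IsBounded {x | M * N x - f x ≤ R} := by
  refine isBounded_iff_forall_norm_le.2 ⟨R / ((M - S) * κ), fun x hx => ?_⟩
  have hMS : 0 < M - S := sub_pos.2 hSM
  rw [le_div_iff₀ (mul_pos hMS hκ)]
  calc ‖x‖ * ((M - S) * κ) = (M - S) * (κ * ‖x‖) := by ring
    _ ≤ (M - S) * N x := mul_le_mul_of_nonneg_left (hN x) hMS.le
    _ ≤ M * N x - f x := by linarith [hf x]
    _ ≤ R := hx

lemma one_sub_sq_mul_sq_le (ρ x y : ℝ) :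
    (1 - ρ ^ 2) * x ^ 2 ≤ x ^ 2 + y ^ 2 + 2 * ρ * x * y := by
  nlinarith [sq_nonneg (ρ * x + y)]

lemma one_sub_sq_mul_sq_add_le (ρ u v x y : ℝ) :
    (1 - ρ ^ 2) * (u * x + v * y) ^ 2
      ≤ (u ^ 2 + v ^ 2 - 2 * u * v * ρ) * (x ^ 2 + y ^ 2 + 2 * ρ * x * y) := by
  nlinarith [sq_nonneg (u * y - v * x + ρ * (u * x - v * y))]

lemma mul_add_mul_le_sqrt_mul_sqrt {ρ : ℝ} (hρ : ρ ^ 2 < 1) (u v x y : ℝ) :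
    u * x + v * y ≤ √((u ^ 2 + v ^ 2 - 2 * u * v * ρ) / (1 - ρ ^ 2))
      * √(x ^ 2 + y ^ 2 + 2 * ρ * x * y) := by
  have hρ' : 0 < 1 - ρ ^ 2 := sub_pos.2 hρ
  have hQ : 0 ≤ x ^ 2 + y ^ 2 + 2 * ρ * x * y :=
    (mul_nonneg hρ'.le (sq_nonneg x)).trans (one_sub_sq_mul_sq_le ρ x y)
  rw [← sqrt_mul' _ hQ]
  refine (le_abs_self _).trans (abs_le_sqrt ?_)
  rw [div_mul_eq_mul_div, le_div_iff₀ hρ', mul_comm]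
  exact one_sub_sq_mul_sq_add_le ρ u v x y

section TwoAsset

variable {σ₁ σ₂ ρ : ℝ}

lemma two_asset_mean_le_sharpe_mul_vol (hσ₁ : σ₁ ≠ 0) (hσ₂ : σ₂ ≠ 0) (hρ : ρ ^ 2 < 1)
    (m₁ m₂ : ℝ) (p : ℝ × ℝ) :
    m₁ * p.1 + m₂ * p.2
      ≤ √(((m₁ / σ₁) ^ 2 + (m₂ / σ₂) ^ 2 - 2 * (m₁ / σ₁) * (m₂ / σ₂) * ρ) / (1 - ρ ^ 2))
        * √(σ₁ ^ 2 * p.1 ^ 2 + σ₂ ^ 2 * p.2 ^ 2 + 2 * ρ * σ₁ * σ₂ * p.1 * p.2) := by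
  convert mul_add_mul_le_sqrt_mul_sqrt hρ (m₁ / σ₁) (m₂ / σ₂) (σ₁ * p.1) (σ₂ * p.2) using 1
  · field_simp
  · ring_nf

lemma two_asset_norm_le_vol (hσ₁ : 0 ≤ σ₁) (hσ₂ : 0 ≤ σ₂) (hρ : ρ ^ 2 ≤ 1) (p : ℝ × ℝ) :
    √(1 - ρ ^ 2) * min σ₁ σ₂ * ‖p‖
      ≤ √(σ₁ ^ 2 * p.1 ^ 2 + σ₂ ^ 2 * p.2 ^ 2 + 2 * ρ * σ₁ * σ₂ * p.1 * p.2) := by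
  have hκ : 0 ≤ √(1 - ρ ^ 2) * min σ₁ σ₂ := mul_nonneg (sqrt_nonneg _) (le_min hσ₁ hσ₂)
  have key : ∀ {σ t : ℝ}, min σ₁ σ₂ ≤ σ → (1 - ρ ^ 2) * (σ * t) ^ 2
      ≤ σ₁ ^ 2 * p.1 ^ 2 + σ₂ ^ 2 * p.2 ^ 2 + 2 * ρ * σ₁ * σ₂ * p.1 * p.2 →
      √(1 - ρ ^ 2) * min σ₁ σ₂ * |t|
        ≤ √(σ₁ ^ 2 * p.1 ^ 2 + σ₂ ^ 2 * p.2 ^ 2 + 2 * ρ * σ₁ * σ₂ * p.1 * p.2) := by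
    intro σ t hσ h
    refine le_sqrt_of_sq_le (le_trans ?_ h)
    rw [mul_pow, mul_pow, sq_sqrt (sub_nonneg.2 hρ), sq_abs, mul_pow, mul_assoc]
    gcongr
  rw [Prod.norm_def, Real.norm_eq_abs, Real.norm_eq_abs, mul_max_of_nonneg _ _ hκ]
  refine max_le (key (min_le_left _ _) ?_) (key (min_le_right _ _) ?_)
  · linarith [one_sub_sq_mul_sq_le ρ (σ₁ * p.1) (σ₂ * p.2)]
  · linarith [one_sub_sq_mul_sq_le ρ (σ₂ * p.2) (σ₁ * p.1)]

end TwoAsset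

theorem two_asset_ES_constraint_set_bounded_general
    (r μ₁ μ₂ σ₁ σ₂ ρ Δ R α q : ℝ) (hr : r ≠ 0) (hσ₁ : 0 < σ₁) (hσ₂ : 0 < σ₂)
    (hρ₁ : -1 < ρ) (hρ₂ : ρ < 1) (hΔ : 0 < Δ)
    (K_ES : Set (ℝ × ℝ))
    (hK : K_ES = {p : ℝ × ℝ |
      -((Real.exp (r*Δ) - 1) / r) * ((μ₁ - r) * p.1 + (μ₂ - r) * p.2)
        + (stdNormalPDF q / α) * Real.sqrt (((Real.exp (2*r*Δ) - 1) / (2*r))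
            * (σ₁^2 * p.1^2 + σ₂^2 * p.2^2 + 2*ρ*σ₁*σ₂*p.1*p.2)) ≤ R})
    (M_ES : ℝ)
    (hM : M_ES = Real.sqrt ((Real.exp (2*r*Δ) - 1) / (2*r))
        * (r / (Real.exp (r*Δ) - 1)) * (stdNormalPDF q / α))
    (hSharpe : Real.sqrt ((((μ₁ - r)/σ₁)^2 + ((μ₂ - r)/σ₂)^2
        - 2*((μ₁ - r)/σ₁)*((μ₂ - r)/σ₂)*ρ) / (1 - ρ^2)) < M_ES) :
    Bornology.IsBounded K_ES := by
  have hρ : ρ ^ 2 < 1 := (sq_lt_one_iff_abs_lt_one ρ).2 (abs_lt.2 ⟨hρ₁, hρ₂⟩)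
  have hA : 0 < (exp (r * Δ) - 1) / r := exp_mul_sub_one_div_pos_s16 hr hΔ
  have hB : 0 < (exp (2 * r * Δ) - 1) / (2 * r) :=
    exp_mul_sub_one_div_pos_s16 (mul_ne_zero two_ne_zero hr) hΔ
  refine (isBounded_setOf_mul_sub_le (R := R / ((exp (r * Δ) - 1) / r))
    (two_asset_mean_le_sharpe_mul_vol hσ₁.ne' hσ₂.ne' hρ (μ₁ - r) (μ₂ - r))
    (two_asset_norm_le_vol hσ₁.le hσ₂.le hρ.le)
    (mul_pos (sqrt_pos.2 (sub_pos.2 hρ)) (lt_min hσ₁ hσ₂)) hSharpe).subset ?_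
  intro p hp
  rw [hK, mem_ofPred_eq, sqrt_mul hB.le] at hp
  rw [mem_ofPred_eq, le_div_iff₀ hA, hM]
  have hE : exp (r * Δ) - 1 ≠ 0 := fun h => hA.ne' (by rw [h, zero_div])
  have hAM : r / (exp (r * Δ) - 1) * ((exp (r * Δ) - 1) / r) = 1 := by field_simp
  refine (le_of_eq ?_).trans hp
  linear_combination (√((exp (2 * r * Δ) - 1) / (2 * r)) * (stdNormalPDF q / α)
    * √(σ₁ ^ 2 * p.1 ^ 2 + σ₂ ^ 2 * p.2 ^ 2 + 2 * ρ * σ₁ * σ₂ * p.1 * p.2)) * hAM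

/-- In a two-asset economy, if the diversification-adjusted Sharpe ratio is
smaller than the threshold `M_ES`, then the dynamic Expected Shortfall
constraint set is bounded. -/
theorem two_asset_ES_constraint_set_bounded
    (r μ₁ μ₂ σ₁ σ₂ ρ Δ R α q : ℝ) (hr : r ≠ 0) (hσ₁ : 0 < σ₁) (hσ₂ : 0 < σ₂)
    (hρ₁ : -1 < ρ) (hρ₂ : ρ < 1) (hΔ : 0 < Δ) (hR : 0 < R)
    (hα₁ : 0 < α) (hα₂ : α < 1/2) (hq : stdNormalCDF q = α)
    (K_ES : Set (ℝ × ℝ))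
    (hK : K_ES = {p : ℝ × ℝ |
      -((Real.exp (r*Δ) - 1) / r) * ((μ₁ - r) * p.1 + (μ₂ - r) * p.2)
        + (stdNormalPDF q / α) * Real.sqrt (((Real.exp (2*r*Δ) - 1) / (2*r))
            * (σ₁^2 * p.1^2 + σ₂^2 * p.2^2 + 2*ρ*σ₁*σ₂*p.1*p.2)) ≤ R})
    (M_ES : ℝ)
    (hM : M_ES = Real.sqrt ((Real.exp (2*r*Δ) - 1) / (2*r))
        * (r / (Real.exp (r*Δ) - 1)) * (stdNormalPDF q / α))
    (hSharpe : Real.sqrt ((((μ₁ - r)/σ₁)^2 + ((μ₂ - r)/σ₂)^2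
        - 2*((μ₁ - r)/σ₁)*((μ₂ - r)/σ₂)*ρ) / (1 - ρ^2)) < M_ES) :
    Bornology.IsBounded K_ES :=
  two_asset_ES_constraint_set_bounded_general r μ₁ μ₂ σ₁ σ₂ ρ Δ R α q hr hσ₁ hσ₂ hρ₁ hρ₂ hΔ K_ES hK
    M_ES hM hSharpe
end
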